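/- Let p be a prime number and let A be the free associative (noncommutative) ring ℤ{X,Y} on two generators X and Y over ℤ. Then there is no sequence (α₀, α₁, α₂, …) of elements of A such that for every natural number n, the ghost component ω_n(α₀,…,α_n) = α₀^{p^n} + p·α₁^{p^{n−1}} + p²·α₂^{p^{n−2}} + ⋯ + pⁿ·α_n is congruent to X^{p^n}·Y^{p^n} modulo [A,A]. (Already the conditions for n = 0 and n = 1 are contradictory.) -/

import Mathlib

/-!
Compose with the trace of a representation `A → M_n(𝔽_p)`: it kills `[A,A]`, kills `p`, and
satisfies `tr(M^p) = (tr M)^p`. So the ghost conditions for `n = 0, 1` force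
`tr(xy)^p = tr(x^p y^p)`. Sending `X ↦ E₀₁`, `Y ↦ E₁₀` gives `tr(XY) = 1` but `X^p = 0`.
-/

/-- The additive subgroup `[A,A]` of a ring `A` generated by all commutators `a*b - b*a`. -/
def commutatorAddSubgroup (A : Type*) [Ring A] : AddSubgroup A :=
  AddSubgroup.closure {x : A | ∃ a b : A, x = a * b - b * a}

/-- The `n`-th ghost (Witt) polynomial evaluated on a sequence:
`ω_n(a₀,…,a_n) = ∑_{i=0}^{n} pⁱ · aᵢ^{p^{n-i}}`. -/
def ghostComponent (p : ℕ) {A : Type*} [Ring A] (a : ℕ → A) (n : ℕ) : A :=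
  ∑ i ∈ Finset.range (n + 1), (p : A) ^ i * (a i) ^ (p ^ (n - i))

open Matrix

theorem trace_map_eq_zero_of_mem_commutatorAddSubgroup {A R n : Type*} [Ring A] [CommRing R]
    [Fintype n] [DecidableEq n] (f : A →+* Matrix n n R) {x : A}
    (hx : x ∈ commutatorAddSubgroup A) : trace (f x) = 0 := by
  induction hx using AddSubgroup.closure_induction with
  | mem x hx =>
    obtain ⟨a, b, rfl⟩ := hx
    rw [map_sub, map_mul, map_mul, trace_sub, trace_mul_comm, sub_self]
  | zero => rw [map_zero, trace_zero]
  | add x y _ _ hx hy => rw [map_add, trace_add, hx, hy, add_zero]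
  | neg x _ hx => rw [map_neg, trace_neg, hx, neg_zero]

theorem trace_map_eq_of_sub_mem_commutatorAddSubgroup {A R n : Type*} [Ring A] [CommRing R]
    [Fintype n] [DecidableEq n] (f : A →+* Matrix n n R) {a b : A}
    (h : a - b ∈ commutatorAddSubgroup A) : trace (f a) = trace (f b) := by
  rw [← sub_eq_zero, ← trace_sub, ← map_sub]
  exact trace_map_eq_zero_of_mem_commutatorAddSubgroup f h

theorem ghostComponent_zero (p : ℕ) {A : Type*} [Ring A] (a : ℕ → A) :
    ghostComponent p a 0 = a 0 := by
  simp [ghostComponent]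

theorem ghostComponent_one (p : ℕ) {A : Type*} [Ring A] (a : ℕ → A) :
    ghostComponent p a 1 = a 0 ^ p + p * a 1 := by
  simp [ghostComponent, Finset.sum_range_succ]

theorem trace_map_pow_eq_of_ghostComponent {A n : Type*} [Ring A] [Fintype n] [DecidableEq n]
    {p : ℕ} [Fact p.Prime] (f : A →+* Matrix n n (ZMod p)) (α : ℕ → A) (x y : A)
    (h₀ : ghostComponent p α 0 - x * y ∈ commutatorAddSubgroup A)
    (h₁ : ghostComponent p α 1 - x ^ p * y ^ p ∈ commutatorAddSubgroup A) :
    trace (f (x * y)) ^ p = trace (f (x ^ p * y ^ p)) := by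
  rw [ghostComponent_zero] at h₀
  rw [ghostComponent_one] at h₁
  have hp : f (p : A) = 0 := by
    rw [map_natCast, ← map_natCast (scalar n), ZMod.natCast_self, map_zero]
  rw [← trace_map_eq_of_sub_mem_commutatorAddSubgroup f h₀,
    ← trace_map_eq_of_sub_mem_commutatorAddSubgroup f h₁, map_add, map_mul, hp, zero_mul,
    add_zero, map_pow, ZMod.trace_pow_card]

theorem Matrix.single_pow_eq_zero_of_ne {n R : Type*} [Fintype n] [DecidableEq n] [Semiring R]
    {i j : n} (hij : i ≠ j) (c : R) {k : ℕ} (hk : 2 ≤ k) : single i j c ^ k = 0 :=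
  pow_eq_zero_of_le hk ((sq _).trans (single_mul_single_of_ne c i j i hij.symm c))

theorem stmt_11 (p : ℕ) (hp : p.Prime)
    (X Y : FreeAlgebra ℤ (Fin 2))
    (hX : X = FreeAlgebra.ι ℤ 0) (hY : Y = FreeAlgebra.ι ℤ 1) :
    ¬ ∃ α : ℕ → FreeAlgebra ℤ (Fin 2),
        ∀ n : ℕ,
          ghostComponent p α n - X ^ (p ^ n) * Y ^ (p ^ n) ∈
            commutatorAddSubgroup (FreeAlgebra ℤ (Fin 2)) := by
  have : Fact p.Prime := ⟨hp⟩
  rintro ⟨α, hα⟩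
  let f : FreeAlgebra ℤ (Fin 2) →+* Matrix (Fin 2) (Fin 2) (ZMod p) :=
    (FreeAlgebra.lift ℤ ![single 0 1 1, single 1 0 1]).toRingHom
  have hfX : f X = single 0 1 1 := by simp [f, hX]
  have hfY : f Y = single 1 0 1 := by simp [f, hY]
  have hfrob := trace_map_pow_eq_of_ghostComponent f α X Y
    (by simpa using hα 0) (by simpa using hα 1)
  rw [map_mul, map_mul, map_pow, hfX, hfY, single_pow_eq_zero_of_ne zero_ne_one _ hp.two_le,
    zero_mul, trace_zero, single_mul_single_same, trace_single_eq_same, one_mul, one_pow] at hfrob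
  exact one_ne_zero hfrob
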